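/- Let m ≥ 2, α ∈ (0,1), and let P_α be the m×m symmetric-channel matrix with entries (P_α)_{zy} = α·1{z=y} + (1−α)/m, whose optimal predictive distribution is the uniform vector u* with u*_z = 1/m. Then for every u ∈ Δ^m, (ξα²/(2(α + (1−α)/m)))·‖u − u*‖² ≤ C(P_α) − φ(u;P_α) ≤ (ξα²/(2(1−α)/m))·‖u − u*‖², where ‖·‖ is the Euclidean norm and ξ = log₂ e. -/

import Mathlib

open Finset

/-- The probability simplex Δ^m. -/
def simplex (m : ℕ) : Set (Fin m → ℝ) :=
  {u | (∀ z, 0 ≤ u z) ∧ ∑ z, u z = 1}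

/-- Shannon entropy (base 2) of a nonnegative vector, with `0 · log₂ 0 = 0`. -/
noncomputable def entH {m : ℕ} (v : Fin m → ℝ) : ℝ :=
  ∑ y, -(v y * Real.logb 2 (v y))

/-- The channel function φ(u;P) = h(uᵀP) − ∑_z u_z h(P_z). -/
noncomputable def phi {m : ℕ} (u : Fin m → ℝ) (P : Matrix (Fin m) (Fin m) ℝ) : ℝ :=
  entH (fun y => ∑ z, u z * P z y) - ∑ z, u z * entH (P z)

/-- The channel capacity C(P) = sup_{u ∈ Δ^m} φ(u;P). -/
noncomputable def cap {m : ℕ} (P : Matrix (Fin m) (Fin m) ℝ) : ℝ :=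
  sSup ((fun u => phi u P) '' simplex m)

/-- The symmetric noise channel P_α = αI + (1−α)(1/m) e eᵀ. -/
noncomputable def Psym (m : ℕ) (α : ℝ) : Matrix (Fin m) (Fin m) ℝ :=
  fun z y => α * (if z = y then 1 else 0) + (1 - α) / m

/- ---------- auxiliary scalar lemmas ---------- -/

lemma scs_log_diff_ge {a b B : ℝ} (ha : 0 < a) (hab : a ≤ b) (hbB : b ≤ B) :
    (b - a) / B ≤ Real.log b - Real.log a := by
  have hb : 0 < b := lt_of_lt_of_le ha hab
  have hB : 0 < B := lt_of_lt_of_le hb hbB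
  have h1 : Real.log (a / b) ≤ a / b - 1 := Real.log_le_sub_one_of_pos (by positivity)
  rw [Real.log_div (ne_of_gt ha) (ne_of_gt hb)] at h1
  have h2 : (b - a) / B ≤ (b - a) / b := by
    apply div_le_div_of_nonneg_left (by linarith) hb hbB
  have h3 : (b - a) / b = 1 - a / b := by field_simp
  linarith

lemma scs_log_diff_le {A a b : ℝ} (hA : 0 < A) (hAa : A ≤ a) (hab : a ≤ b) :
    Real.log b - Real.log a ≤ (b - a) / A := by
  have ha : 0 < a := lt_of_lt_of_le hA hAa
  have hb : 0 < b := lt_of_lt_of_le ha hab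
  have h1 : Real.log (b / a) ≤ b / a - 1 := Real.log_le_sub_one_of_pos (by positivity)
  rw [Real.log_div (ne_of_gt hb) (ne_of_gt ha)] at h1
  have h2 : (b - a) / a ≤ (b - a) / A := by
    apply div_le_div_of_nonneg_left (by linarith) hA hAa
  have h3 : b / a - 1 = (b - a) / a := by field_simp
  linarith

lemma scs_hasDerivF (q r : ℝ) {p : ℝ} (hp : p ≠ 0) :
    HasDerivAt (fun x : ℝ => x * Real.log x - x * Real.log q - x + q - (x - q) ^ 2 * r)
      (Real.log p - Real.log q - 2 * (p - q) * r) p := by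
  have h1 : HasDerivAt (fun x : ℝ => x * Real.log x) (Real.log p + 1) p :=
    Real.hasDerivAt_mul_log hp
  have h2 : HasDerivAt (fun x : ℝ => x * Real.log q) (1 * Real.log q) p :=
    (hasDerivAt_id p).mul_const _
  have h3 : HasDerivAt (fun x : ℝ => (x - q) ^ 2 * r) ((2 * (p - q) ^ 1 * 1) * r) p :=
    (((hasDerivAt_id p).sub_const q).pow 2).mul_const r
  have := (((h1.sub h2).sub (hasDerivAt_id p)).add_const q).sub h3
  refine this.congr_deriv ?_
  ring

lemma scs_key_lower {q B p : ℝ} (hq : 0 < q) (hqB : q ≤ B) (hp : 0 < p) (hpB : p ≤ B) :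
    (p - q) ^ 2 / (2 * B) ≤ p * (Real.log p - Real.log q) - p + q := by
  have hB : 0 < B := lt_of_lt_of_le hq hqB
  set r : ℝ := (2 * B)⁻¹ with hr
  set F : ℝ → ℝ := fun x => x * Real.log x - x * Real.log q - x + q - (x - q) ^ 2 * r with hF
  have hFq : F q = 0 := by simp [hF]
  have hder : ∀ x : ℝ, x ≠ 0 → HasDerivAt F (Real.log x - Real.log q - 2 * (x - q) * r) x :=
    fun x hx => scs_hasDerivF q r hx
  have hx2 : ∀ x : ℝ, 2 * (x - q) * r = (x - q) / B := by
    intro x; rw [hr]; field_simp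
  have key : 0 ≤ F p := by
    rcases le_or_gt q p with hqp | hqp
    · have mono : MonotoneOn F (Set.Icc q B) := by
        apply monotoneOn_of_deriv_nonneg (convex_Icc q B)
        · intro x hx
          exact (hder x (ne_of_gt (lt_of_lt_of_le hq hx.1))).differentiableAt.continuousAt.continuousWithinAt
        · intro x hx
          rw [interior_Icc] at hx
          exact (hder x (ne_of_gt (lt_trans hq hx.1))).differentiableAt.differentiableWithinAt
        · intro x hx
          rw [interior_Icc] at hx
          rw [(hder x (ne_of_gt (lt_trans hq hx.1))).deriv]
          have h := scs_log_diff_ge hq hx.1.le hx.2.le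
          linarith [hx2 x]
      have := mono (Set.mem_Icc.2 ⟨le_refl q, hqB⟩) (Set.mem_Icc.2 ⟨hqp, hpB⟩) hqp
      linarith
    · have anti : AntitoneOn F (Set.Icc p q) := by
        apply antitoneOn_of_deriv_nonpos (convex_Icc p q)
        · intro x hx
          exact (hder x (ne_of_gt (lt_of_lt_of_le hp hx.1))).differentiableAt.continuousAt.continuousWithinAt
        · intro x hx
          rw [interior_Icc] at hx
          exact (hder x (ne_of_gt (lt_trans hp hx.1))).differentiableAt.differentiableWithinAt
        · intro x hx
          rw [interior_Icc] at hx
          rw [(hder x (ne_of_gt (lt_trans hp hx.1))).deriv]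
          have hxpos : 0 < x := lt_trans hp hx.1
          have h := scs_log_diff_ge hxpos hx.2.le hqB
          have h3 : (q - x) / B = -((x - q) / B) := by ring
          linarith [hx2 x]
      have := anti (Set.mem_Icc.2 ⟨le_refl p, hqp.le⟩) (Set.mem_Icc.2 ⟨hqp.le, le_refl q⟩) hqp.le
      linarith
  have heq : (p - q) ^ 2 / (2 * B) = (p - q) ^ 2 * r := by rw [hr]; field_simp
  simp only [hF] at key
  linarith [key, heq ▸ le_refl ((p - q) ^ 2 / (2 * B))]

lemma scs_key_upper {q A p : ℝ} (hA : 0 < A) (hAq : A ≤ q) (hAp : A ≤ p) :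
    p * (Real.log p - Real.log q) - p + q ≤ (p - q) ^ 2 / (2 * A) := by
  have hq : 0 < q := lt_of_lt_of_le hA hAq
  have hp : 0 < p := lt_of_lt_of_le hA hAp
  set r : ℝ := (2 * A)⁻¹ with hr
  set F : ℝ → ℝ := fun x => x * Real.log x - x * Real.log q - x + q - (x - q) ^ 2 * r with hF
  have hFq : F q = 0 := by simp [hF]
  have hder : ∀ x : ℝ, x ≠ 0 → HasDerivAt F (Real.log x - Real.log q - 2 * (x - q) * r) x :=
    fun x hx => scs_hasDerivF q r hx
  have hx2 : ∀ x : ℝ, 2 * (x - q) * r = (x - q) / A := by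
    intro x; rw [hr]; field_simp
  have key : F p ≤ 0 := by
    rcases le_or_gt q p with hqp | hqp
    · have anti : AntitoneOn F (Set.Icc q p) := by
        apply antitoneOn_of_deriv_nonpos (convex_Icc q p)
        · intro x hx
          exact (hder x (ne_of_gt (lt_of_lt_of_le hq hx.1))).differentiableAt.continuousAt.continuousWithinAt
        · intro x hx
          rw [interior_Icc] at hx
          exact (hder x (ne_of_gt (lt_trans hq hx.1))).differentiableAt.differentiableWithinAt
        · intro x hx
          rw [interior_Icc] at hx
          rw [(hder x (ne_of_gt (lt_trans hq hx.1))).deriv]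
          have h := scs_log_diff_le hA hAq hx.1.le
          linarith [hx2 x]
      have := anti (Set.mem_Icc.2 ⟨le_refl q, hqp⟩) (Set.mem_Icc.2 ⟨hqp, le_refl p⟩) hqp
      linarith
    · have mono : MonotoneOn F (Set.Icc p q) := by
        apply monotoneOn_of_deriv_nonneg (convex_Icc p q)
        · intro x hx
          exact (hder x (ne_of_gt (lt_of_lt_of_le hp hx.1))).differentiableAt.continuousAt.continuousWithinAt
        · intro x hx
          rw [interior_Icc] at hx
          exact (hder x (ne_of_gt (lt_trans hp hx.1))).differentiableAt.differentiableWithinAt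
        · intro x hx
          rw [interior_Icc] at hx
          rw [(hder x (ne_of_gt (lt_trans hp hx.1))).deriv]
          have hAx : A ≤ x := le_trans hAp hx.1.le
          have h := scs_log_diff_le hA hAx hx.2.le
          have h3 : (q - x) / A = -((x - q) / A) := by ring
          linarith [hx2 x]
      have := mono (Set.mem_Icc.2 ⟨le_refl p, hqp.le⟩) (Set.mem_Icc.2 ⟨hqp.le, le_refl q⟩) hqp.le
      linarith
  have heq : (p - q) ^ 2 / (2 * A) = (p - q) ^ 2 * r := by rw [hr]; field_simp
  simp only [hF] at key
  linarith [key, heq ▸ le_refl ((p - q) ^ 2 / (2 * A))]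

/- ---------- channel computations ---------- -/

lemma scs_row_ent {m : ℕ} (α : ℝ) (z : Fin m) : entH (Psym m α z) =
    (-((α + (1-α)/m) * Real.logb 2 (α + (1-α)/m)) - -((1-α)/m * Real.logb 2 ((1-α)/m)))
      + m * -((1-α)/m * Real.logb 2 ((1-α)/m)) := by
  set c : ℝ := (1-α)/m with hc
  set e1 : ℝ := -((α + c) * Real.logb 2 (α + c))
  set e2 : ℝ := -(c * Real.logb 2 c)
  have hterm : ∀ y : Fin m, -(Psym m α z y * Real.logb 2 (Psym m α z y)) =
      (if z = y then e1 - e2 else 0) + e2 := by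
    intro y
    by_cases h : z = y <;> simp [Psym, h, hc, e1, e2]
  unfold entH
  rw [Finset.sum_congr rfl (fun y _ => hterm y), Finset.sum_add_distrib,
    Finset.sum_ite_eq, Finset.sum_const]
  simp [mul_comm]

lemma scs_out_eq {m : ℕ} (α : ℝ) (w : Fin m → ℝ) (hw : w ∈ simplex m) (y : Fin m) :
    ∑ z, w z * Psym m α z y = α * w y + (1-α)/m := by
  have h1 : ∀ z : Fin m, w z * Psym m α z y
      = α * (if z = y then w z else 0) + w z * ((1-α)/m) := by
    intro z; by_cases h : z = y <;> simp [Psym, h] <;> ring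
  rw [Finset.sum_congr rfl (fun z _ => h1 z), Finset.sum_add_distrib, ← Finset.mul_sum,
    ← Finset.sum_mul, Finset.sum_ite_eq', hw.2]
  simp

lemma scs_phi_eq {m : ℕ} (α : ℝ) (w : Fin m → ℝ) (hw : w ∈ simplex m) :
    phi w (Psym m α) = entH (fun y => α * w y + (1-α)/m)
      - ((-((α + (1-α)/m) * Real.logb 2 (α + (1-α)/m)) - -((1-α)/m * Real.logb 2 ((1-α)/m)))
      + m * -((1-α)/m * Real.logb 2 ((1-α)/m))) := by
  unfold phi
  have h1 : (fun y => ∑ z, w z * Psym m α z y) = fun y => α * w y + (1-α)/m := by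
    funext y; exact scs_out_eq α w hw y
  rw [h1]
  congr 1
  rw [Finset.sum_congr rfl (fun z _ => by rw [scs_row_ent α z]), ← Finset.sum_mul, hw.2, one_mul]

lemma scs_ent_unif {m : ℕ} (hm : 2 ≤ m) :
    entH (fun _ : Fin m => (1:ℝ)/m) = Real.logb 2 m := by
  have hm0 : (0:ℝ) < m := by exact_mod_cast by omega
  unfold entH
  rw [Finset.sum_const, Finset.card_fin, nsmul_eq_mul]
  rw [one_div, Real.logb_inv]
  field_simp

lemma scs_kl {m : ℕ} (hm : 2 ≤ m) (v : Fin m → ℝ) (hv : ∑ y, v y = 1) :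
    Real.logb 2 m - entH v
      = (Real.log 2)⁻¹ * ∑ y, (v y * (Real.log (v y) - Real.log (1/(m:ℝ)))
          - v y + 1/(m:ℝ)) := by
  have hm0 : (0:ℝ) < m := by exact_mod_cast by omega
  have hL2 : (0:ℝ) < Real.log 2 := Real.log_pos (by norm_num)
  have hS : ∑ y, (v y * (Real.log (v y) - Real.log (1/(m:ℝ))) - v y + 1/(m:ℝ))
      = (∑ y, v y * Real.log (v y)) + Real.log m := by
    have h1 : ∀ y : Fin m, v y * (Real.log (v y) - Real.log (1/(m:ℝ))) - v y + 1/(m:ℝ)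
        = v y * Real.log (v y) - v y * Real.log (1/(m:ℝ)) - v y + 1/(m:ℝ) := by
      intro y; ring
    rw [Finset.sum_congr rfl (fun y _ => h1 y)]
    rw [Finset.sum_add_distrib, Finset.sum_sub_distrib, Finset.sum_sub_distrib,
      ← Finset.sum_mul, hv, Finset.sum_const, Finset.card_fin, nsmul_eq_mul]
    rw [one_div, Real.log_inv]
    field_simp
    ring
  rw [hS]
  have h2 : entH v = -((∑ y, v y * Real.log (v y)) / Real.log 2) := by
    unfold entH
    have h3 : ∀ y : Fin m, -(v y * Real.logb 2 (v y)) = -(v y * Real.log (v y) / Real.log 2) := by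
      intro y; rw [Real.logb]; ring
    rw [Finset.sum_congr rfl (fun y _ => h3 y), Finset.sum_neg_distrib, Finset.sum_div]
  rw [h2, Real.logb]
  field_simp
  ring

/-- sensitivity bounds for the symmetric channel P_α (0 < α < 1),
whose optimal predictive distribution is uniform (u*_z = 1/m): for every u ∈ Δ^m,
(ξα²/(2(α+(1−α)/m)))·‖u−u*‖² ≤ C(P_α) − φ(u;P_α) ≤ (ξα²/(2(1−α)/m))·‖u−u*‖²,
with ξ = log₂ e. -/
theorem symmetric_channel_sensitivity {m : ℕ} (hm : 2 ≤ m) (α : ℝ)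
    (hα : α ∈ Set.Ioo (0 : ℝ) 1)
    (u : Fin m → ℝ) (hu : u ∈ simplex m) :
    (Real.logb 2 (Real.exp 1) * α ^ 2 / (2 * (α + (1 - α) / m))) *
        (∑ z, (u z - 1 / m) ^ 2) ≤ cap (Psym m α) - phi u (Psym m α) ∧
    cap (Psym m α) - phi u (Psym m α) ≤
      (Real.logb 2 (Real.exp 1) * α ^ 2 / (2 * ((1 - α) / m))) *
        (∑ z, (u z - 1 / m) ^ 2) := by
  obtain ⟨hα0, hα1⟩ := hα
  obtain ⟨hupos, husum⟩ := hu
  have hu' : u ∈ simplex m := ⟨hupos, husum⟩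
  have hm0 : (0:ℝ) < m := by exact_mod_cast by omega
  have hm1 : (1:ℝ) ≤ m := by exact_mod_cast by omega
  have hL2 : (0:ℝ) < Real.log 2 := Real.log_pos (by norm_num)
  set q : ℝ := 1/(m:ℝ) with hqdef
  set c : ℝ := (1-α)/(m:ℝ) with hcdef
  have hq : 0 < q := div_pos one_pos hm0
  have hc : 0 < c := div_pos (by linarith) hm0
  have hcq : c ≤ q := by
    rw [hcdef, hqdef]
    gcongr
    linarith
  have hqB : q ≤ α + c := by
    have hsplit : q = α/m + c := by rw [hqdef, hcdef]; ring
    have : α/m ≤ α := by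
      rw [div_le_iff₀ hm0]; nlinarith
    linarith
  have hxi : Real.logb 2 (Real.exp 1) = (Real.log 2)⁻¹ := by
    rw [Real.logb, Real.log_exp]; exact one_div _
  -- the output distribution of any simplex element
  have hvmem : ∀ w : Fin m → ℝ, w ∈ simplex m → ∀ y,
      0 < α * w y + c ∧ α * w y + c ≤ α + c := by
    intro w hw y
    have h1 : 0 ≤ w y := hw.1 y
    have h2 : w y ≤ 1 := by
      have := Finset.single_le_sum (f := w) (fun i _ => hw.1 i) (Finset.mem_univ y)
      rw [hw.2] at this; exact this
    constructor
    · nlinarith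
    · nlinarith
  have hvsum : ∀ w : Fin m → ℝ, w ∈ simplex m → ∑ y, (α * w y + c) = 1 := by
    intro w hw
    rw [Finset.sum_add_distrib, ← Finset.mul_sum, hw.2, Finset.sum_const,
      Finset.card_fin, nsmul_eq_mul, hcdef]
    field_simp
    ring
  -- the difference  logb 2 m - entH (output)  as a relative-entropy sum
  set S : (Fin m → ℝ) → ℝ := fun w => ∑ y, ((α * w y + c) * (Real.log (α * w y + c)
      - Real.log q) - (α * w y + c) + q) with hSdef
  have hdiff : ∀ w : Fin m → ℝ, w ∈ simplex m →
      Real.logb 2 m - entH (fun y => α * w y + c) = (Real.log 2)⁻¹ * S w := by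
    intro w hw
    exact scs_kl hm _ (hvsum w hw)
  -- S is nonneg
  have hSnonneg : ∀ w : Fin m → ℝ, w ∈ simplex m → 0 ≤ S w := by
    intro w hw
    apply Finset.sum_nonneg
    intro y _
    obtain ⟨h1, h2⟩ := hvmem w hw y
    have := scs_key_lower hq hqB h1 h2
    have hnn : (0:ℝ) ≤ (α * w y + c - q)^2 / (2 * (α + c)) := by positivity
    linarith
  -- uniform distribution
  set ustar : Fin m → ℝ := fun _ => 1/(m:ℝ) with hustardef
  have hustar : ustar ∈ simplex m := by
    constructor
    · intro z; rw [hustardef]; positivity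
    · rw [hustardef, Finset.sum_const, Finset.card_fin, nsmul_eq_mul]; field_simp
  have hvstar : (fun y => α * ustar y + c) = fun _ : Fin m => q := by
    funext y; rw [hustardef, hqdef, hcdef]; field_simp; ring
  -- capacity equals phi at uniform
  have hcap : cap (Psym m α) = phi ustar (Psym m α) := by
    unfold cap
    apply IsGreatest.csSup_eq
    constructor
    · exact ⟨ustar, hustar, rfl⟩
    · rintro x ⟨w, hw, rfl⟩
      show phi w (Psym m α) ≤ phi ustar (Psym m α)
      rw [scs_phi_eq α w hw, scs_phi_eq α ustar hustar, hvstar, hqdef, scs_ent_unif hm]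
      have h1 := hdiff w hw
      have h2 := hSnonneg w hw
      have h3 : 0 ≤ (Real.log 2)⁻¹ * S w := by positivity
      simp only [hcdef] at h1 ⊢
      linarith [h1]
  -- main identity
  have hmain : cap (Psym m α) - phi u (Psym m α) = (Real.log 2)⁻¹ * S u := by
    rw [hcap, scs_phi_eq α u hu', scs_phi_eq α ustar hustar, hvstar, hqdef, scs_ent_unif hm]
    have h1 := hdiff u hu'
    simp only [hcdef] at h1 ⊢
    linarith [h1]
  -- termwise quadratic bounds
  have hsq : ∀ y, (α * u y + c - q)^2 = α^2 * (u y - 1/m)^2 := by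
    intro y
    have h : α * u y + c - q = α * (u y - 1/m) := by
      rw [hcdef, hqdef]; field_simp; ring
    rw [h]; ring
  have hlow : (α^2 / (2 * (α + c))) * (∑ z, (u z - 1/(m:ℝ))^2) ≤ S u := by
    have h1 : ∀ y ∈ Finset.univ, (α^2 * (u y - 1/(m:ℝ))^2) / (2 * (α + c))
        ≤ ((α * u y + c) * (Real.log (α * u y + c) - Real.log q) - (α * u y + c) + q) := by
      intro y _
      obtain ⟨hp1, hp2⟩ := hvmem u hu' y
      have := scs_key_lower hq hqB hp1 hp2
      rw [hsq y] at this
      exact this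
    have h2 := Finset.sum_le_sum h1
    calc (α^2 / (2 * (α + c))) * (∑ z, (u z - 1/(m:ℝ))^2)
        = ∑ y, (α^2 * (u y - 1/(m:ℝ))^2) / (2 * (α + c)) := by
          rw [Finset.mul_sum]
          apply Finset.sum_congr rfl
          intro y _; ring
      _ ≤ S u := h2
  have hhigh : S u ≤ (α^2 / (2 * c)) * (∑ z, (u z - 1/(m:ℝ))^2) := by
    have h1 : ∀ y ∈ Finset.univ, ((α * u y + c) * (Real.log (α * u y + c)
        - Real.log q) - (α * u y + c) + q) ≤ (α^2 * (u y - 1/(m:ℝ))^2) / (2 * c) := by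
      intro y _
      have hcp : c ≤ α * u y + c := by nlinarith [hu'.1 y]
      have := scs_key_upper hc hcq hcp
      rw [hsq y] at this
      exact this
    have h2 := Finset.sum_le_sum h1
    calc S u ≤ ∑ y, (α^2 * (u y - 1/(m:ℝ))^2) / (2 * c) := h2
      _ = (α^2 / (2 * c)) * (∑ z, (u z - 1/(m:ℝ))^2) := by
          rw [Finset.mul_sum]
          apply Finset.sum_congr rfl
          intro y _; ring
  have hL2inv : (0:ℝ) ≤ (Real.log 2)⁻¹ := by positivity
  constructor
  · calc (Real.logb 2 (Real.exp 1) * α ^ 2 / (2 * (α + (1 - α) / m))) *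
        (∑ z, (u z - 1 / m) ^ 2)
        = (Real.log 2)⁻¹ * ((α^2 / (2 * (α + c))) * (∑ z, (u z - 1/(m:ℝ))^2)) := by
          rw [hxi, hcdef]; ring
      _ ≤ (Real.log 2)⁻¹ * S u := by
          apply mul_le_mul_of_nonneg_left hlow hL2inv
      _ = cap (Psym m α) - phi u (Psym m α) := hmain.symm
  · calc cap (Psym m α) - phi u (Psym m α) = (Real.log 2)⁻¹ * S u := hmain
      _ ≤ (Real.log 2)⁻¹ * ((α^2 / (2 * c)) * (∑ z, (u z - 1/(m:ℝ))^2)) := by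
          apply mul_le_mul_of_nonneg_left hhigh hL2inv
      _ = (Real.logb 2 (Real.exp 1) * α ^ 2 / (2 * ((1 - α) / m))) *
        (∑ z, (u z - 1 / m) ^ 2) := by
          rw [hxi, hcdef]; ring
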